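/- Let φ : Σ_A⁺ → ℝ be continuous, let (P, μ) be a conformal pair for φ, let u : Σ_A⁺ → ℝ be Hölder (in particular continuous), and let K ∈ ℝ. Define the Borel probability measure ν by ν(B) = (∫_B exp(−u) dμ) / (∫ exp(−u) dμ). Then (P + K, ν) is a conformal pair for φ + u∘σ − u + K. In particular, modifying φ by an almost coboundary u∘σ − u + K changes the constant of the conformal pair by K and replaces the measure by an equivalent measure with Hölder logarithmic Radon–Nikodym derivative. -/
import Mathlib


open MeasureTheory Real
open scoped ENNReal

variable {r : ℕ}

/-- The one-sided subshift of finite type determined by the transition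
matrix `A`. -/
abbrev OneSided (A : Fin r → Fin r → Prop) : Type :=
  {x : ℕ → Fin r // ∀ i, A (x i) (x (i + 1))}

/-- The shift map `σ` on the one-sided subshift. -/
def shift1 {A : Fin r → Fin r → Prop} (x : OneSided A) : OneSided A :=
  ⟨fun i => x.1 (i + 1), fun i => x.2 (i + 1)⟩

/-- The metric `d(x,y) = ∑_{i ∈ ℕ, x i ≠ y i} 2^{-i}` on the one-sided
subshift. -/
noncomputable def dist1 {A : Fin r → Fin r → Prop} (x y : OneSided A) : ℝ :=
  ∑' i : ℕ, if x.1 i ≠ y.1 i then ((2 : ℝ)⁻¹) ^ i else 0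

/-- `ψ` is Hölder with respect to the distance function `d`. -/
def IsHolderWrt {X : Type*} (d : X → X → ℝ) (ψ : X → ℝ) : Prop :=
  ∃ C > 0, ∃ α ∈ Set.Ioc (0 : ℝ) 1, ∀ x y, |ψ x - ψ y| ≤ C * d x y ^ α

/-- A word `w : Fin n → Fin r` is admissible if `A (w i) (w (i+1))` for all
`i < n − 1`. -/
def AdmissibleWord {n : ℕ} (A : Fin r → Fin r → Prop) (w : Fin n → Fin r) : Prop :=
  ∀ i : ℕ, ∀ h : i + 1 < n, A (w ⟨i, Nat.lt_of_succ_lt h⟩) (w ⟨i + 1, h⟩)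

/-- The `n`-cylinder `[w]` of a word `w : Fin n → Fin r`. -/
def Cyl (A : Fin r → Fin r → Prop) {n : ℕ} (w : Fin n → Fin r) : Set (OneSided A) :=
  {x | ∀ i : Fin n, x.1 i = w i}

/-- `(P, μ)` is a conformal pair for `φ`: `μ` is a Borel probability measure
with `μ(σ '' E) = ∫_E exp(P − φ) dμ` for every Borel `E` contained in a
1-cylinder.  This encodes `log(dμ(σx)/dμ(x)) = −φ(x) + P`. -/
def ConformalPair (A : Fin r → Fin r → Prop) (φ : OneSided A → ℝ) (P : ℝ)
    (μ : Measure (OneSided A)) : Prop :=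
  IsProbabilityMeasure μ ∧
    ∀ (j : Fin r) (E : Set (OneSided A)), MeasurableSet E → (∀ x ∈ E, x.1 0 = j) →
      μ (shift1 '' E) = ∫⁻ x in E, ENNReal.ofReal (Real.exp (P - φ x)) ∂μ

/-- `Σ_A⁺` is transitive: some point has dense forward orbit under `σ`. -/
def Transitive1 (A : Fin r → Fin r → Prop) : Prop :=
  ∃ x : OneSided A, Dense (Set.range fun n : ℕ => shift1^[n] x)

/-- `Σ_A⁺` is mixing with constant `M`: for all symbols `i`, `j` there is an
admissible word of length `M+1` beginning with `i` and ending with `j`. -/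
def MixingWith (A : Fin r → Fin r → Prop) (M : ℕ) : Prop :=
  1 ≤ M ∧ ∀ i j : Fin r, ∃ w : Fin (M + 1) → Fin r,
    AdmissibleWord A w ∧ w 0 = i ∧ w (Fin.last M) = j



section Aux

open Filter

private lemma dist1_nonneg' {A : Fin r → Fin r → Prop} (x y : OneSided A) : 0 ≤ dist1 x y := by
  refine tsum_nonneg fun i => ?_
  split <;> positivity

private lemma dist1_le' {A : Fin r → Fin r → Prop} (x y : OneSided A) (n : ℕ)
    (h : ∀ i < n, x.1 i = y.1 i) : dist1 x y ≤ 2 * ((2:ℝ)⁻¹) ^ n := by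
  set f : ℕ → ℝ := fun i => if x.1 i ≠ y.1 i then ((2 : ℝ)⁻¹) ^ i else 0 with hf
  have hf0 : ∀ i, 0 ≤ f i := fun i => by simp only [hf]; split <;> positivity
  have hfle : ∀ i, f i ≤ ((2:ℝ)⁻¹) ^ i := fun i => by
    simp only [hf]; split
    · exact le_rfl
    · positivity
  have hgeo : Summable fun i : ℕ => ((2:ℝ)⁻¹) ^ i :=
    summable_geometric_of_lt_one (by norm_num) (by norm_num)
  have hsum : Summable f := Summable.of_nonneg_of_le hf0 hfle hgeo
  have key := Summable.sum_add_tsum_nat_add (f := f) n hsum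
  have hzero : ∑ i ∈ Finset.range n, f i = 0 := by
    refine Finset.sum_eq_zero fun i hi => ?_
    simp only [hf, ite_eq_right_iff]
    intro hne
    exact absurd (h i (Finset.mem_range.1 hi)) hne
  have hd : dist1 x y = ∑' i : ℕ, f (i + n) := by
    rw [dist1, ← key, hzero, zero_add]
  rw [hd]
  have hle2 : ∑' i : ℕ, f (i + n) ≤ ∑' i : ℕ, ((2:ℝ)⁻¹) ^ i * ((2:ℝ)⁻¹) ^ n := by
    refine Summable.tsum_le_tsum (fun i => ?_) (hsum.comp_injective fun a b => by omega)
      (by simpa using hgeo.mul_right (((2:ℝ)⁻¹) ^ n))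
    calc f (i + n) ≤ ((2:ℝ)⁻¹) ^ (i + n) := hfle _
    _ = ((2:ℝ)⁻¹) ^ i * ((2:ℝ)⁻¹) ^ n := pow_add _ _ _
  refine hle2.trans ?_
  rw [tsum_mul_right, tsum_geometric_of_lt_one (by norm_num) (by norm_num)]
  norm_num

private lemma dist1_le_two' {A : Fin r → Fin r → Prop} (x y : OneSided A) : dist1 x y ≤ 2 := by
  simpa using dist1_le' x y 0 (by omega)

private lemma continuous_of_holder' {A : Fin r → Fin r → Prop} {u : OneSided A → ℝ}
    (hu : IsHolderWrt dist1 u) : Continuous u := by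
  obtain ⟨C, hC, α, ⟨hα0, hα1⟩, hH⟩ := hu
  rw [continuous_iff_continuousAt]
  intro x
  refine Metric.tendsto_nhds.2 fun ε hε => ?_
  have h1 : Tendsto (fun n : ℕ => (2:ℝ) * ((2:ℝ)⁻¹) ^ n) atTop (nhds 0) := by
    simpa using (tendsto_pow_atTop_nhds_zero_of_lt_one (r := (2:ℝ)⁻¹)
      (by norm_num) (by norm_num)).const_mul (2:ℝ)
  have h2 : Tendsto (fun n : ℕ => C * ((2:ℝ) * ((2:ℝ)⁻¹) ^ n) ^ α) atTop (nhds 0) := by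
    have h3 : ContinuousAt (fun t : ℝ => t ^ α) 0 :=
      Real.continuousAt_rpow_const 0 α (Or.inr hα0.le)
    have h4 := (h3.tendsto.comp h1).const_mul C
    simpa [Real.zero_rpow hα0.ne'] using h4
  obtain ⟨n, hn⟩ := (h2.eventually (eventually_lt_nhds hε)).exists
  have hV : {y : OneSided A | ∀ i < n, y.1 i = x.1 i} ∈ nhds x := by
    have hVeq : {y : OneSided A | ∀ i < n, y.1 i = x.1 i} =
        ⋂ i ∈ Finset.range n, (fun y : OneSided A => y.1 i) ⁻¹' {x.1 i} := by
      ext y; simp [Set.mem_iInter]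
    rw [hVeq]
    refine IsOpen.mem_nhds ?_ ?_
    · refine isOpen_biInter_finset fun i _ => ?_
      exact ((continuous_apply i).comp continuous_subtype_val).isOpen_preimage _
        (isOpen_discrete _)
    · simp
  filter_upwards [hV] with y hy
  have hd : dist1 y x ≤ 2 * ((2:ℝ)⁻¹) ^ n := dist1_le' y x n hy
  have hb : |u y - u x| ≤ C * ((2:ℝ) * ((2:ℝ)⁻¹) ^ n) ^ α := by
    refine (hH y x).trans ?_
    exact mul_le_mul_of_nonneg_left
      (Real.rpow_le_rpow (dist1_nonneg' _ _) hd hα0.le) hC.le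
  rw [Real.dist_eq]
  exact lt_of_le_of_lt hb hn

private lemma measurable_shift1' {A : Fin r → Fin r → Prop} :
    Measurable (shift1 (A := A)) := by
  refine Measurable.subtype_mk (measurable_pi_iff.2 fun i => ?_)
  exact (measurable_pi_apply (i + 1)).comp measurable_subtype_coe

end Aux

/-- (Almost coboundaries and conformal pairs) If `(P, μ)` is a conformal pair
for a continuous `φ`, `u` is Hölder and `K ∈ ℝ`, then `(P + K, ν)` is a
conformal pair for `φ + u∘σ − u + K`, where
`ν(B) = (∫_B exp(−u) dμ) / (∫ exp(−u) dμ)`. -/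
theorem conformal_pair_almost_coboundary
    {A : Fin r → Fin r → Prop} (φ : OneSided A → ℝ) (hφ : Continuous φ)
    (P : ℝ) (μ : Measure (OneSided A)) (hpair : ConformalPair A φ P μ)
    (u : OneSided A → ℝ) (hu : IsHolderWrt dist1 u) (K : ℝ) :
    ConformalPair A (fun x => φ x + u (shift1 x) - u x + K) (P + K)
      ((∫⁻ x, ENNReal.ofReal (Real.exp (-u x)) ∂μ)⁻¹ •
        μ.withDensity fun x => ENNReal.ofReal (Real.exp (-u x))) := by
  haveI : OpensMeasurableSpace (OneSided A) := Subtype.opensMeasurableSpace _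
  obtain ⟨hμprob, hμconf⟩ := hpair
  have hum : Measurable u := (continuous_of_holder' hu).measurable
  have hφm : Measurable φ := hφ.measurable
  have hσm : Measurable (shift1 (A := A)) := measurable_shift1'
  set w : OneSided A → ℝ≥0∞ := fun x => ENNReal.ofReal (Real.exp (-u x)) with hw
  have hwm : Measurable w := (Real.measurable_exp.comp hum.neg).ennreal_ofReal
  set c : ℝ≥0∞ := ∫⁻ x, w x ∂μ with hcdef
  have hne : Nonempty (OneSided A) := by
    by_contra h
    have huniv : (Set.univ : Set (OneSided A)) = ∅ := by
      simp [Set.univ_eq_empty_iff, not_nonempty_iff.1 h]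
    have h1 := hμprob.measure_univ
    rw [huniv] at h1
    simp at h1
  obtain ⟨C, hC, α, ⟨hα0, hα1⟩, hH⟩ := hu
  obtain ⟨x₀⟩ := hne
  set B : ℝ := |u x₀| + C * (2:ℝ) ^ α with hB
  have hubd : ∀ x, |u x| ≤ B := by
    intro x
    have h1 : |u x - u x₀| ≤ C * dist1 x x₀ ^ α := hH x x₀
    have h2 : dist1 x x₀ ^ α ≤ (2:ℝ) ^ α :=
      Real.rpow_le_rpow (dist1_nonneg' _ _) (dist1_le_two' _ _) hα0.le
    have h3 : |u x| ≤ |u x₀| + |u x - u x₀| := by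
      calc |u x| = |u x₀ + (u x - u x₀)| := by ring_nf
      _ ≤ |u x₀| + |u x - u x₀| := abs_add_le _ _
    refine h3.trans ?_
    have h4 := mul_le_mul_of_nonneg_left h2 hC.le
    have := h1.trans h4
    rw [hB]
    linarith
  have hc0 : c ≠ 0 := by
    have hlow : ENNReal.ofReal (Real.exp (-B)) ≤ c := by
      calc ENNReal.ofReal (Real.exp (-B))
          = ∫⁻ _, ENNReal.ofReal (Real.exp (-B)) ∂μ := by
            simp [lintegral_const, hμprob.measure_univ]
      _ ≤ c := lintegral_mono fun x => ENNReal.ofReal_le_ofReal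
            (Real.exp_le_exp.2 (by have := (abs_le.1 (hubd x)).2; linarith))
    intro h
    rw [h, le_zero_iff, ENNReal.ofReal_eq_zero] at hlow
    exact absurd hlow (not_le.2 (Real.exp_pos _))
  have hcT : c ≠ ⊤ := by
    have hhigh : c ≤ ENNReal.ofReal (Real.exp B) := by
      calc c ≤ ∫⁻ _, ENNReal.ofReal (Real.exp B) ∂μ :=
            lintegral_mono fun x => ENNReal.ofReal_le_ofReal
              (Real.exp_le_exp.2 (by have := (abs_le.1 (hubd x)).1; linarith))
      _ = ENNReal.ofReal (Real.exp B) := by simp [lintegral_const, hμprob.measure_univ]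
    exact (hhigh.trans_lt ENNReal.ofReal_lt_top).ne
  constructor
  · constructor
    rw [Measure.smul_apply, withDensity_apply _ MeasurableSet.univ, Measure.restrict_univ,
      smul_eq_mul, ← hcdef]
    exact ENNReal.inv_mul_cancel hc0 hcT
  · intro j E hE hEj
    set ρ : OneSided A → ℝ≥0∞ := fun x => ENNReal.ofReal (Real.exp (P - φ x)) with hρ
    have hρm : Measurable ρ :=
      (Real.measurable_exp.comp (measurable_const.sub hφm)).ennreal_ofReal
    have hSm : MeasurableSet {y : OneSided A | A j (y.1 0)} := by
      have hSeq : {y : OneSided A | A j (y.1 0)} =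
          (fun y : OneSided A => y.1 0) ⁻¹' {k | A j k} := rfl
      rw [hSeq]
      exact ((measurable_pi_apply 0).comp measurable_subtype_coe)
        (Set.Finite.measurableSet (Set.toFinite _))
    set g : {y : OneSided A // A j (y.1 0)} → OneSided A := fun y =>
      ⟨fun n => Nat.casesOn n j (fun k => y.1.1 k), by
        intro i
        cases i with
        | zero => exact y.2
        | succ k => exact y.1.2 k⟩ with hg
    have hgm : Measurable g := by
      refine Measurable.subtype_mk (measurable_pi_iff.2 fun n => ?_)
      cases n with
      | zero => exact measurable_const
      | succ k =>
        exact (measurable_pi_apply k).comp (measurable_subtype_coe.comp measurable_subtype_coe)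
    have himg : shift1 '' E = Subtype.val '' (g ⁻¹' E) := by
      ext y
      constructor
      · rintro ⟨x, hxE, rfl⟩
        have hmem : A j ((shift1 x).1 0) := by
          have h0 := hEj x hxE
          have h1 := x.2 0
          rwa [h0] at h1
        refine ⟨⟨shift1 x, hmem⟩, ?_, rfl⟩
        have hgx : g ⟨shift1 x, hmem⟩ = x := by
          apply Subtype.ext
          funext n
          cases n with
          | zero => exact (hEj x hxE).symm
          | succ k => rfl
        simpa [Set.mem_preimage, hgx] using hxE
      · rintro ⟨⟨y, hyS⟩, hyE, rfl⟩
        refine ⟨g ⟨y, hyS⟩, hyE, ?_⟩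
        apply Subtype.ext
        funext n
        rfl
    have hEimg : MeasurableSet (shift1 '' E) := by
      rw [himg]
      exact MeasurableSet.subtype_image hSm (hgm hE)
    have hkey : μ.restrict (shift1 '' E) =
        Measure.map shift1 ((μ.restrict E).withDensity ρ) := by
      refine Measure.ext fun Bs hBs => ?_
      rw [Measure.restrict_apply hBs, Measure.map_apply hσm hBs,
        withDensity_apply _ (hσm hBs), Measure.restrict_restrict (hσm hBs)]
      have h1 := hμconf j (shift1 ⁻¹' Bs ∩ E) ((hσm hBs).inter hE) (fun x hx => hEj x hx.2)
      rw [← h1]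
      congr 1
      rw [Set.inter_comm (shift1 ⁻¹' Bs) E, Set.image_inter_preimage]
      exact Set.inter_comm _ _
    have hFm : Measurable fun x : OneSided A =>
        ENNReal.ofReal (Real.exp (P + K - (φ x + u (shift1 x) - u x + K))) :=
      (Real.measurable_exp.comp (measurable_const.sub
        (((hφm.add (hum.comp hσm)).sub hum).add_const K))).ennreal_ofReal
    have hL : (c⁻¹ • μ.withDensity w) (shift1 '' E) =
        c⁻¹ * ∫⁻ x in E, ρ x * w (shift1 x) ∂μ := by
      rw [Measure.smul_apply, smul_eq_mul, withDensity_apply _ hEimg]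
      congr 1
      calc ∫⁻ x in shift1 '' E, w x ∂μ
          = ∫⁻ x, w x ∂(Measure.map shift1 ((μ.restrict E).withDensity ρ)) := by rw [← hkey]
      _ = ∫⁻ x, w (shift1 x) ∂((μ.restrict E).withDensity ρ) := lintegral_map hwm hσm
      _ = ∫⁻ x, (ρ * fun y => w (shift1 y)) x ∂(μ.restrict E) :=
            lintegral_withDensity_eq_lintegral_mul _ hρm (hwm.comp hσm)
      _ = ∫⁻ x in E, ρ x * w (shift1 x) ∂μ := rfl
    have hR : (∫⁻ x in E, ENNReal.ofReal
          (Real.exp (P + K - (φ x + u (shift1 x) - u x + K))) ∂(c⁻¹ • μ.withDensity w)) =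
        c⁻¹ * ∫⁻ x in E, w x *
          ENNReal.ofReal (Real.exp (P + K - (φ x + u (shift1 x) - u x + K))) ∂μ := by
      rw [Measure.restrict_smul, lintegral_smul_measure, restrict_withDensity hE,
        lintegral_withDensity_eq_lintegral_mul _ hwm hFm]
      rfl
    rw [hL, hR]
    congr 1
    refine lintegral_congr fun x => ?_
    rw [hρ, hw]
    rw [← ENNReal.ofReal_mul (Real.exp_pos _).le, ← Real.exp_add,
      ← ENNReal.ofReal_mul (Real.exp_pos _).le, ← Real.exp_add]
    congr 1
    ring
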